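/- Let c > 1, λ₊ = (1+√c)², and g(φ) = Re V⁺(λ₊^{-1/2}e^{iφ}) as above. Then g is strictly increasing on [0, π] and strictly decreasing on (-π, 0]; consequently, for any δ > 0 there is C > 0 such that g(φ) ≥ C·δ⁴ whenever |φ| ≥ δ, φ ∈ (-π, π]. -/

import Mathlib

open Real

/-- The edge phase `Re V⁺` along the circle of radius `λ₊^{-1/2}`. -/
noncomputable def edgePhase (c : ℝ) : ℝ → ℝ := fun φ =>
  -(1 + Real.sqrt c) * Real.cos φ
    - (c / 2) * Real.log (1 + ((1 + Real.sqrt c) ^ 2)⁻¹ - 2 * (1 + Real.sqrt c)⁻¹ * Real.cos φ)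
    - (1 / 2) * Real.log ((1 + Real.sqrt c) ^ 2)
    - (-1 - Real.sqrt c - c * Real.log (1 - (1 + Real.sqrt c)⁻¹) - Real.log (1 + Real.sqrt c))

/-- The edge phase is strictly increasing on `[0,π]`, strictly decreasing on `(-π,0]`, and
bounded below by `C·δ⁴` away from the origin. -/
theorem edge_phase_monotone_and_lower_bound (c : ℝ) (hc : 1 < c) :
    StrictMonoOn (edgePhase c) (Set.Icc 0 π) ∧
    StrictAntiOn (edgePhase c) (Set.Ioc (-π) 0) ∧
    ∀ δ > (0 : ℝ), ∃ C > (0 : ℝ), ∀ φ ∈ Set.Ioc (-π) π, δ ≤ |φ| →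
      C * δ ^ 4 ≤ edgePhase c φ := by
  set s := Real.sqrt c with hs_def
  have hs : 1 < s := by
    have : Real.sqrt 1 < Real.sqrt c := Real.sqrt_lt_sqrt (by norm_num) hc
    simpa using this
  have hcs : s ^ 2 = c := Real.sq_sqrt (by linarith)
  set a : ℝ := 1 + s with ha_def
  have ha : 2 < a := by linarith
  have ha0 : (0:ℝ) < a := by linarith
  have hane : a ≠ 0 := ne_of_gt ha0
  have hainv : 0 < a⁻¹ := by positivity
  have hainv1 : a⁻¹ < 1 := by
    rw [inv_lt_one_iff₀]; right; linarith
  set h : ℝ → ℝ := fun t => -a * t - (c / 2) * Real.log (1 + (a ^ 2)⁻¹ - 2 * a⁻¹ * t) with hh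
  have hpos : ∀ t : ℝ, t ≤ 1 → 0 < 1 + (a ^ 2)⁻¹ - 2 * a⁻¹ * t := by
    intro t ht
    have h2 : (a ^ 2)⁻¹ = a⁻¹ * a⁻¹ := by rw [sq, mul_inv]
    have h3 : (0:ℝ) < 1 - a⁻¹ := by linarith
    nlinarith [mul_pos h3 h3, mul_le_mul_of_nonneg_left ht hainv.le]
  have hanti : StrictAntiOn h (Set.Icc (-1:ℝ) 1) := by
    apply strictAntiOn_of_deriv_neg (convex_Icc _ _)
    · apply ContinuousOn.sub (by fun_prop)
      apply ContinuousOn.mul continuousOn_const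
      apply ContinuousOn.log (by fun_prop)
      intro t ht
      exact (hpos t ht.2).ne'
    · intro t ht
      rw [interior_Icc] at ht
      have hu := hpos t ht.2.le
      have hd1 : HasDerivAt (fun t : ℝ => 1 + (a ^ 2)⁻¹ - 2 * a⁻¹ * t) (-(2 * a⁻¹)) t := by
        simpa using (HasDerivAt.const_sub (1 + (a ^ 2)⁻¹) ((hasDerivAt_id t).const_mul (2 * a⁻¹)))
      have hd2 : HasDerivAt h
          (-a - c / 2 * (-(2 * a⁻¹) / (1 + (a ^ 2)⁻¹ - 2 * a⁻¹ * t))) t := by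
        have hlog := (hd1.log hu.ne').const_mul (c / 2)
        have hid := (hasDerivAt_id t).const_mul (-a)
        simpa [hh, mul_comm, Pi.sub_def] using hid.sub hlog
      rw [hd2.deriv]
      set u : ℝ := 1 + (a ^ 2)⁻¹ - 2 * a⁻¹ * t with hu_def
      have hac : (a - 1) ^ 2 = c := by rw [ha_def]; simpa using hcs
      have hu' : a ^ 2 * u = a ^ 2 + 1 - 2 * a * t := by
        rw [hu_def]; field_simp
      have h5 : (0:ℝ) < a ^ 2 * u - c := by
        rw [hu']
        nlinarith [mul_pos ha0 (show (0:ℝ) < 1 - t by linarith [ht.2])]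
      have e : -a - c / 2 * (-(2 * a⁻¹) / u) = -((a ^ 2 * u - c) * a⁻¹ / u) := by
        field_simp
        ring
      rw [e]
      have := div_pos (mul_pos h5 hainv) hu
      linarith
  have hEdge : ∀ φ, edgePhase c φ = h (Real.cos φ)
      + (-(1 / 2) * Real.log (a ^ 2)
        - (-1 - s - c * Real.log (1 - a⁻¹) - Real.log a)) := by
    intro φ
    simp only [edgePhase, hh, ← hs_def, ← ha_def]
    ring
  have hcosmem : ∀ φ : ℝ, Real.cos φ ∈ Set.Icc (-1:ℝ) 1 := fun φ =>
    ⟨Real.neg_one_le_cos φ, Real.cos_le_one φ⟩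
  have SM : StrictMonoOn (edgePhase c) (Set.Icc 0 π) := by
    intro x hx y hy hxy
    have hcx : Real.cos y < Real.cos x := Real.strictAntiOn_cos hx hy hxy
    have h6 := hanti (hcosmem y) (hcosmem x) hcx
    rw [hEdge x, hEdge y]
    exact add_lt_add_left h6 _
  have SA : StrictAntiOn (edgePhase c) (Set.Ioc (-π) 0) := by
    intro x hx y hy hxy
    have hmx : -x ∈ Set.Icc 0 π := ⟨by linarith [hx.2], by linarith [hx.1]⟩
    have hmy : -y ∈ Set.Icc 0 π := ⟨by linarith [hy.2], by linarith [hy.1]⟩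
    have hcx : Real.cos (-x) < Real.cos (-y) :=
      Real.strictAntiOn_cos hmy hmx (by linarith)
    rw [Real.cos_neg, Real.cos_neg] at hcx
    have h6 := hanti (hcosmem x) (hcosmem y) hcx
    rw [hEdge x, hEdge y]
    exact add_lt_add_left h6 _
  have hzero : edgePhase c 0 = 0 := by
    rw [hEdge 0, Real.cos_zero]
    have harg : 1 + (a ^ 2)⁻¹ - 2 * a⁻¹ * 1 = (1 - a⁻¹) ^ 2 := by
      field_simp
      ring
    simp only [hh, harg]
    rw [Real.log_pow, Real.log_pow]
    push_cast
    rw [ha_def]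
    ring
  have heven : ∀ φ, edgePhase c (-φ) = edgePhase c φ := by
    intro φ; simp [edgePhase]
  refine ⟨SM, SA, ?_⟩
  intro δ hδ
  by_cases hδπ : δ ≤ π
  · have hδmem : δ ∈ Set.Icc 0 π := ⟨hδ.le, hδπ⟩
    have hEp : 0 < edgePhase c δ := by
      have := SM (Set.left_mem_Icc.2 Real.pi_pos.le) hδmem hδ
      rw [hzero] at this
      exact this
    refine ⟨edgePhase c δ / δ ^ 4, by positivity, ?_⟩
    intro φ hφ habs
    have h1 : edgePhase c δ / δ ^ 4 * δ ^ 4 = edgePhase c δ :=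
      div_mul_cancel₀ _ (by positivity)
    rw [h1]
    have hφπ : |φ| ≤ π := abs_le.2 ⟨hφ.1.le, hφ.2⟩
    have hmono : edgePhase c δ ≤ edgePhase c |φ| :=
      SM.monotoneOn hδmem ⟨abs_nonneg φ, hφπ⟩ habs
    rcases abs_cases φ with ⟨hcase, _⟩ | ⟨hcase, _⟩
    · rwa [hcase] at hmono
    · rw [hcase, heven] at hmono; exact hmono
  · refine ⟨1, one_pos, fun φ hφ habs => absurd ?_ hδπ⟩
    exact le_trans habs (abs_le.2 ⟨hφ.1.le, hφ.2⟩)
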